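/- Let A and D be diagonal n×n real matrices with A invertible, let C be an invertible n×n real matrix, and suppose there exist a tridiagonal matrix T and a diagonal matrix Λ such that rank(T·C − C·Λ) ≤ 1. Then S := A T A⁻¹ is tridiagonal and rank(S·(ACDC⁻¹) − (ACDC⁻¹)·T) ≤ 2. That is, the layer ACDC⁻¹ has displacement rank at most 2 with respect to tridiagonal operators. -/

import Mathlib

/-!
Put `E = T C - C Λ`. Since `D` and `Λ` commute, `C Λ C⁻¹` commutes with `M = C D C⁻¹`, so in
`T = C Λ C⁻¹ + E C⁻¹` only the error term survives in the commutator: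
`T M - M T = E D C⁻¹ - M E C⁻¹`, a difference of two matrices of rank at most `rank E ≤ 1`.
The displacement of `A M` with respect to `(A T A⁻¹, T)` is `A (T M - M T)`, of the same rank.
Conjugating by the diagonal `A` only rescales entries, `(A T A⁻¹)ᵢⱼ = aᵢ Tᵢⱼ / aⱼ`, so the band
structure of `T` is kept.
-/

open Matrix

theorem commutator_conj_eq {R : Type*} [Ring R] {t c c' d l : R} (hcc' : c * c' = 1)
    (hc'c : c' * c = 1) (hdl : Commute d l) :
    t * (c * d * c') - c * d * c' * t =
      (t * c - c * l) * (d * c') - c * d * c' * (t * c - c * l) * c' := by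
  have hcancel (x : R) : c' * (c * x) = x := by rw [← mul_assoc, hc'c, one_mul]
  have hld (x : R) : l * (d * x) = d * (l * x) := by rw [← mul_assoc, ← hdl.eq, mul_assoc]
  simp only [mul_sub, sub_mul, mul_assoc, hcc', mul_one, hcancel, hld]
  abel

namespace Matrix

section Rank

variable {m n K : Type*} [Fintype n] [Field K]

theorem rank_add_le (X Y : Matrix m n K) : (X + Y).rank ≤ X.rank + Y.rank := by
  have h : LinearMap.range (X + Y).mulVecLin ≤
      LinearMap.range X.mulVecLin ⊔ LinearMap.range Y.mulVecLin := by
    rw [mulVecLin_add]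
    exact LinearMap.range_add_le _ _
  exact (Submodule.finrank_mono h).trans (Submodule.finrank_add_le_finrank_add_finrank _ _)

theorem rank_neg (X : Matrix m n K) : (-X).rank = X.rank := by
  have h : (-X).mulVecLin = -X.mulVecLin := by
    ext
    simp
  rw [rank, rank, h, LinearMap.range_neg]

theorem rank_sub_le (X Y : Matrix m n K) : (X - Y).rank ≤ X.rank + Y.rank := by
  simpa [sub_eq_add_neg, rank_neg] using rank_add_le X (-Y)

end Rank

section Diagonal

variable {n R : Type*} [Fintype n] [DecidableEq n]

theorem IsDiag.inv [CommRing R] {A : Matrix n n R} (hA : A.IsDiag) : A⁻¹.IsDiag := by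
  rw [← hA.diagonal_diag, inv_diagonal]
  exact isDiag_diagonal _

theorem IsDiag.commute [CommSemiring R] {A B : Matrix n n R} (hA : A.IsDiag) (hB : B.IsDiag) :
    Commute A B := by
  rw [← hA.diagonal_diag, ← hB.diagonal_diag]
  exact commute_diagonal _ _

theorem IsDiag.mul_mul_apply [CommSemiring R] {A B : Matrix n n R} (hA : A.IsDiag)
    (hB : B.IsDiag) (T : Matrix n n R) (i j : n) : (A * T * B) i j = A i i * T i j * B j j := by
  rw [← hA.diagonal_diag, ← hB.diagonal_diag, mul_diagonal, diagonal_mul, diagonal_apply_eq,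
    diagonal_apply_eq]

end Diagonal

section Displacement

variable {n K : Type*} [Fintype n] [DecidableEq n] [Field K]

theorem rank_commutator_conj_le {C D Λ : Matrix n n K} (hC : IsUnit C.det) (hDΛ : Commute D Λ)
    (T : Matrix n n K) :
    (T * (C * D * C⁻¹) - C * D * C⁻¹ * T).rank ≤ 2 * (T * C - C * Λ).rank := by
  rw [commutator_conj_eq (mul_nonsing_inv C hC) (nonsing_inv_mul C hC) hDΛ]
  set E := T * C - C * Λ
  have h₁ : (E * (D * C⁻¹)).rank ≤ E.rank := rank_mul_le_left _ _
  have h₂ : (C * D * C⁻¹ * E * C⁻¹).rank ≤ E.rank :=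
    (rank_mul_le_left _ _).trans (rank_mul_le_right _ _)
  have := rank_sub_le (E * (D * C⁻¹)) (C * D * C⁻¹ * E * C⁻¹)
  omega

theorem rank_conj_mul_sub_mul_eq {A : Matrix n n K} (hA : IsUnit A.det) (T M : Matrix n n K) :
    (A * T * A⁻¹ * (A * M) - A * M * T).rank = (T * M - M * T).rank := by
  have h : A * T * A⁻¹ * (A * M) - A * M * T = A * (T * M - M * T) := by
    rw [mul_sub, Matrix.mul_assoc (A * T), ← Matrix.mul_assoc A⁻¹, nonsing_inv_mul A hA,
      Matrix.one_mul]
    simp only [Matrix.mul_assoc]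
  rw [h, rank_mul_eq_right_of_isUnit_det A _ hA]

end Displacement

end Matrix

/-- **The ACDC⁻¹ layer has displacement rank at most 2 with respect to tridiagonal
operators.**
If `A`, `D` are diagonal with `A` invertible, `C` is invertible, and there are a
tridiagonal `T` and diagonal `Lam` with `rank (T*C - C*Lam) ≤ 1`, then `S = A*T*A⁻¹` is
tridiagonal and `rank (S*(A*C*D*C⁻¹) - (A*C*D*C⁻¹)*T) ≤ 2`. -/
theorem acdc_displacement_rank (n : ℕ)
    (A D C T Lam : Matrix (Fin n) (Fin n) ℝ)
    (hA : A.IsDiag) (hD : D.IsDiag)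
    (hAu : IsUnit A.det) (hCu : IsUnit C.det)
    (hT : ∀ i j : Fin n, ((i : ℤ) - (j : ℤ)).natAbs > 1 → T i j = 0)
    (hLam : Lam.IsDiag)
    (hdisp : (T * C - C * Lam).rank ≤ 1) :
    (∀ i j : Fin n, ((i : ℤ) - (j : ℤ)).natAbs > 1 → (A * T * A⁻¹) i j = 0) ∧
      ((A * T * A⁻¹) * (A * C * D * C⁻¹) - (A * C * D * C⁻¹) * T).rank ≤ 2 := by
  refine ⟨fun i j hij => ?_, ?_⟩
  · rw [hA.mul_mul_apply hA.inv, hT i j hij, mul_zero, zero_mul]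
  · have hM : A * C * D * C⁻¹ = A * (C * D * C⁻¹) := by simp only [Matrix.mul_assoc]
    rw [hM, rank_conj_mul_sub_mul_eq hAu]
    have := rank_commutator_conj_le hCu (hD.commute hLam) T
    omega
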